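/- Let E be a real locally convex space that is a Baire space. Then E is Asplund if and only if every continuous convex function f : E → ℝ (defined on all of E) is Fréchet differentiable at every point of some dense Gδ subset of E. -/

import Mathlib

open Filter Topology Bornology TopologicalSpace

section Definitions

variable {E : Type*} [AddCommGroup E] [Module ℝ E] [TopologicalSpace E]

/-- A function `f` (thought of as a convex function on an open convex set containing `x₀`)
is Gâteaux differentiable at `x₀` if there is a continuous linear functional `L` such that
for every direction `x` and every `ε > 0` there is `δ > 0` with
`|(f (x₀ + t • x) - f x₀) / t - L x| < ε` whenever `0 < |t| < δ`. -/
def GateauxDiffAt (f : E → ℝ) (x₀ : E) : Prop :=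
  ∃ L : E →L[ℝ] ℝ, ∀ x : E, ∀ ε : ℝ, 0 < ε → ∃ δ : ℝ, 0 < δ ∧ ∀ t : ℝ,
    0 < |t| → |t| < δ → |(f (x₀ + t • x) - f x₀) / t - L x| < ε

/-- A function `f` is Fréchet differentiable at `x₀` if there is a continuous linear
functional `L` such that for every (von Neumann) bounded set `B` and every `ε > 0` there is
`δ > 0` with `|(f (x₀ + t • x) - f x₀) / t - L x| < ε` for all `x ∈ B`, whenever
`0 < |t| < δ`. -/
def FrechetDiffAt (f : E → ℝ) (x₀ : E) : Prop :=
  ∃ L : E →L[ℝ] ℝ, ∀ B : Set E, IsVonNBounded ℝ B → ∀ ε : ℝ, 0 < ε →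
    ∃ δ : ℝ, 0 < δ ∧ ∀ t : ℝ, 0 < |t| → |t| < δ →
      ∀ x ∈ B, |(f (x₀ + t • x) - f x₀) / t - L x| < ε

end Definitions

/-- `E` is Asplund: every continuous convex function on a nonempty open convex set `D`
is Fréchet differentiable at every point of a set which is a dense `Gδ` subset of `D`. -/
def IsAsplund (E : Type*) [AddCommGroup E] [Module ℝ E] [TopologicalSpace E] : Prop :=
  ∀ (D : Set E) (f : E → ℝ), D.Nonempty → IsOpen D → Convex ℝ D →
    ContinuousOn f D → ConvexOn ℝ D f →
    ∃ G : Set E, G ⊆ D ∧ IsGδ (Subtype.val ⁻¹' G : Set D) ∧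
      Dense (Subtype.val ⁻¹' G : Set D) ∧ ∀ x ∈ G, FrechetDiffAt f x

/-!
Near a point `z` of `D`, a continuous convex `f` agrees with a continuous convex function on all
of `E`: the supremum of the affine minorants of `f` at the points of a small ball around `z`
(for a continuous seminorm). Their slopes are uniformly bounded because `f` oscillates little
near `z`, which makes the supremum finite and continuous. So `f` is Fréchet differentiable on a
`Gδ` set that is dense near each point of `D`. Such local sets are glued along a maximal
(Zorn) family of pairwise disjoint open sets: its union is dense in `D`, and since a point lies
in at most one member, the union of the local `Gδ` sets is again `Gδ`.
-/

open Set

section Gluing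

variable {X : Type*} [TopologicalSpace X]

theorem IsGδ.biUnion_of_pairwiseDisjoint {C : Set (Set X)} (hC : C.PairwiseDisjoint id)
    (hCo : ∀ V ∈ C, IsOpen V) {G : Set X → Set X} (hG : ∀ V ∈ C, IsGδ (G V))
    (hGV : ∀ V ∈ C, G V ⊆ V) : IsGδ (⋃ V ∈ C, G V) := by
  choose! O hOo hGO using fun V hV => isGδ_iff_eq_iInter_nat.1 (hG V hV)
  -- a point lies in at most one member of `C`, so the union commutes with the intersection
  have hunion : ⋃ V ∈ C, G V = ⋂ n, ⋃ V ∈ C, V ∩ O V n := by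
    refine Subset.antisymm (fun x hx => ?_) fun x hx => ?_
    · obtain ⟨V, hV, hxV⟩ := mem_iUnion₂.1 hx
      rw [hGO V hV] at hxV
      exact mem_iInter.2 fun n =>
        mem_biUnion hV ⟨hGV V hV (by rw [hGO V hV]; exact hxV), mem_iInter.1 hxV n⟩
    · choose V hV hxV using fun n => mem_iUnion₂.1 (mem_iInter.1 hx n)
      have hVeq : ∀ n, V n = V 0 := fun n =>
        hC.elim_set (hV n) (hV 0) x (hxV n).1 (hxV 0).1
      refine mem_biUnion (hV 0) ?_
      rw [hGO _ (hV 0)]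
      exact mem_iInter.2 fun n => hVeq n ▸ (hxV n).2
  rw [hunion]
  exact .iInter_of_isOpen fun n => isOpen_biUnion fun V hV => (hCo V hV).inter (hOo V hV n)

theorem exists_pairwiseDisjoint_subset_closure_sUnion {P : Set X → Prop} {U : Set X}
    (h : ∀ x ∈ U, ∀ O, IsOpen O → x ∈ O →
      ∃ V ⊆ O, IsOpen V ∧ V.Nonempty ∧ P V) :
    ∃ C : Set (Set X), C.PairwiseDisjoint id ∧ (∀ V ∈ C, IsOpen V ∧ P V) ∧
      U ⊆ closure (⋃₀ C) := by
  set 𝒮 := {C : Set (Set X) | C.PairwiseDisjoint id ∧ ∀ V ∈ C, IsOpen V ∧ P V}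
  obtain ⟨C, hC⟩ := zorn_subset 𝒮 fun c hc hchain =>
    ⟨⋃₀ c, ⟨hchain.pairwiseDisjoint_sUnion id |>.2 fun C hC => (hc hC).1,
      fun V ⟨C, hC, hV⟩ => (hc hC).2 V hV⟩, fun _ => subset_sUnion_of_mem⟩
  refine ⟨C, hC.prop.1, hC.prop.2, fun x hxU => by_contra fun hx => ?_⟩
  obtain ⟨V, hVC, hVo, ⟨y, hy⟩, hPV⟩ := h x hxU _ isClosed_closure.isOpen_compl hx
  have hins : insert V C ∈ 𝒮 :=
    ⟨hC.prop.1.insert fun W hW _ => disjoint_left.2 fun z hzV hzW =>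
        hVC hzV (subset_closure (mem_sUnion_of_mem hzW hW)),
      forall_mem_insert.2 ⟨⟨hVo, hPV⟩, hC.prop.2⟩⟩
  have hV : V ∈ C := hC.2 hins (subset_insert V C) (mem_insert V C)
  exact hVC hy (subset_closure (mem_sUnion_of_mem hy hV))

theorem exists_isGδ_subset_closure_of_locally {S U : Set X}
    (h : ∀ x ∈ U, ∃ G, IsGδ G ∧ G ⊆ S ∧ closure G ∈ 𝓝 x) :
    ∃ G, IsGδ G ∧ G ⊆ S ∧ U ⊆ closure G := by
  obtain ⟨C, hCd, hC, hUC⟩ := exists_pairwiseDisjoint_subset_closure_sUnion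
    (P := fun V => ∃ G, IsGδ G ∧ G ⊆ S ∩ V ∧ V ⊆ closure G) (U := U)
    fun x hx O hOo hxO => by
      obtain ⟨G, hGδ, hGS, hGx⟩ := h x hx
      set V := O ∩ interior (closure G)
      have hVo : IsOpen V := hOo.inter isOpen_interior
      refine ⟨V, inter_subset_left, hVo, ⟨x, hxO, mem_interior_iff_mem_nhds.2 hGx⟩,
        V ∩ G, hVo.isGδ.inter hGδ, fun y hy => ⟨hGS hy.2, hy.1⟩,
        fun y hy => hVo.inter_closure ⟨hy, interior_subset hy.2⟩⟩
  choose! G hGδ hGS hVG using fun V hV => (hC V hV).2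
  refine ⟨⋃ V ∈ C, G V, IsGδ.biUnion_of_pairwiseDisjoint hCd (fun V hV => (hC V hV).1) hGδ
      fun V hV => (hGS V hV).trans inter_subset_right,
    iUnion₂_subset fun V hV => (hGS V hV).trans inter_subset_left, hUC.trans ?_⟩
  refine closure_minimal (sUnion_subset fun V hV => (hVG V hV).trans ?_) isClosed_closure
  exact closure_mono (subset_biUnion_of_mem hV)

end Gluing

section Convex

variable {E : Type*} [AddCommGroup E] [Module ℝ E]

theorem convexOn_ciSup {ι : Type*} [Nonempty ι] {s : Set E} {f : ι → E → ℝ}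
    (hf : ∀ i, ConvexOn ℝ s (f i)) (hbdd : ∀ x ∈ s, BddAbove (range fun i => f i x)) :
    ConvexOn ℝ s fun x => ⨆ i, f i x := by
  refine ⟨(hf (Classical.arbitrary ι)).1, fun x hx y hy a b ha hb hab => ciSup_le fun i => ?_⟩
  calc f i (a • x + b • y) ≤ a * f i x + b * f i y := (hf i).2 hx hy ha hb hab
    _ ≤ a * (⨆ i, f i x) + b * ⨆ i, f i y :=
      add_le_add (mul_le_mul_of_nonneg_left (le_ciSup (hbdd x hx) i) ha)
        (mul_le_mul_of_nonneg_left (le_ciSup (hbdd y hy) i) hb)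

theorem LinearMap.le_div_mul_seminorm_of_le_on_ball {p : Seminorm ℝ E} {ℓ : E →ₗ[ℝ] ℝ}
    {r M : ℝ} (hr : 0 < r) (h : ∀ v ∈ p.ball 0 r, ℓ v ≤ M) (v : E) :
    ℓ v ≤ M / r * p v := by
  refine ge_of_tendsto (x := 𝓝[>] (p v)) ((continuous_const.mul continuous_id).tendsto (p v)
    |>.mono_left nhdsWithin_le_nhds) (eventually_nhdsWithin_of_forall fun s hs => ?_)
  have hs0 : 0 < s := (apply_nonneg p v).trans_lt hs
  have hmem : (r / s) • v ∈ p.ball 0 r := by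
    rw [p.mem_ball_zero, map_smul_eq_mul, Real.norm_of_nonneg (by positivity)]
    calc r / s * p v < r / s * s := by gcongr; exact hs
      _ = r := div_mul_cancel₀ r hs0.ne'
  have := h _ hmem
  rw [map_smul, smul_eq_mul, div_mul_eq_mul_div, div_le_iff₀ hs0] at this
  show ℓ v ≤ M / r * s
  rw [div_mul_eq_mul_div, le_div_iff₀ hr]
  linarith

theorem subgradient_le_div_mul_seminorm {D : Set E} {f : E → ℝ} {ℓ : E →ₗ[ℝ] ℝ}
    {y : E} (hℓ : ∀ x ∈ D, f y + ℓ (x - y) ≤ f x) {p : Seminorm ℝ E} {r M : ℝ}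
    (hr : 0 < r) (hD : p.ball y r ⊆ D) (hM : ∀ x ∈ p.ball y r, f x ≤ f y + M) (v : E) :
    ℓ v ≤ M / r * p v := by
  refine ℓ.le_div_mul_seminorm_of_le_on_ball hr (fun w hw => ?_) v
  have hyw : y + w ∈ p.ball y r := by
    rwa [p.mem_ball, add_sub_cancel_left, ← p.mem_ball_zero]
  have := hℓ _ (hD hyw)
  rw [add_sub_cancel_left] at this
  linarith [hM _ hyw]

variable [TopologicalSpace E] [IsTopologicalAddGroup E]

theorem continuous_of_le_add_mul_seminorm {p : Seminorm ℝ E} (hp : Continuous p) {g : E → ℝ}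
    {C : ℝ} (h : ∀ x y, g x ≤ g y + C * p (x - y)) : Continuous g := by
  refine continuous_iff_continuousAt.2 fun y => tendsto_iff_dist_tendsto_zero.2 <|
    squeeze_zero (fun _ => dist_nonneg) (fun x => ?_)
      ((continuous_const.mul (hp.comp (continuous_sub_right y)) :
        Continuous fun x => C * p (x - y)).tendsto' y 0 (by simp))
  have := h y x
  rw [map_sub_rev] at this
  show dist (g x) (g y) ≤ C * p (x - y)
  rw [Real.dist_eq, abs_le]
  constructor <;> linarith [h x y]

theorem continuous_convexOn_ciSup_affine {ι : Type*} [Nonempty ι] {c : ι → ℝ}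
    (hc : BddAbove (range c)) {ℓ : ι → E →ₗ[ℝ] ℝ} {p : Seminorm ℝ E}
    (hp : Continuous p) {C : ℝ} (hℓ : ∀ i v, ℓ i v ≤ C * p v) :
    Continuous (fun x => ⨆ i, c i + ℓ i x) ∧
      ConvexOn ℝ univ (fun x => ⨆ i, c i + ℓ i x) := by
  obtain ⟨c₀, hc₀⟩ := hc
  have hbdd : ∀ x, BddAbove (range fun i => c i + ℓ i x) := fun x =>
    ⟨c₀ + C * p x, forall_mem_range.2 fun i => add_le_add (hc₀ (mem_range_self i)) (hℓ i x)⟩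
  refine ⟨continuous_of_le_add_mul_seminorm hp (C := C) fun x x' => ciSup_le fun i => ?_,
    convexOn_ciSup (fun i =>
      (convexOn_const (c i) convex_univ).add ((ℓ i).convexOn convex_univ)) fun x _ => hbdd x⟩
  calc c i + ℓ i x = c i + ℓ i x' + ℓ i (x - x') := by rw [map_sub]; ring
    _ ≤ (⨆ i, c i + ℓ i x') + C * p (x - x') :=
      add_le_add (le_ciSup (hbdd x') i) (hℓ i _)

theorem FrechetDiffAt.congr_of_eventuallyEq {f g : E → ℝ} {x₀ : E} (hf : FrechetDiffAt f x₀)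
    (hg : g =ᶠ[𝓝 x₀] f) : FrechetDiffAt g x₀ := by
  obtain ⟨L, hL⟩ := hf
  refine ⟨L, fun B hB ε hε => ?_⟩
  obtain ⟨δ, hδ, hδL⟩ := hL B hB ε hε
  have hU : {v : E | g (x₀ + v) = f (x₀ + v)} ∈ 𝓝 0 :=
    (continuous_const_add x₀).tendsto' 0 x₀ (add_zero x₀) hg
  obtain ⟨δ', hδ', hδ'U⟩ :=
    Metric.eventually_nhds_iff.1 ((hB hU).eventually_nhds_zero (mem_of_mem_nhds hU))
  refine ⟨min δ δ', lt_min hδ hδ', fun t ht htδ x hx => ?_⟩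
  have hgf : g (x₀ + t • x) = f (x₀ + t • x) :=
    hδ'U (by simpa using htδ.trans_le (min_le_right δ δ')) hx
  rw [hgf, hg.self_of_nhds]
  exact hδL t ht (htδ.trans_le (min_le_left δ δ')) x hx

variable [ContinuousSMul ℝ E]

theorem ConvexOn.exists_subgradient {D : Set E} {f : E → ℝ} (hDo : IsOpen D)
    (hf : ConvexOn ℝ D f) (hfc : ContinuousOn f D) {y : E} (hy : y ∈ D) :
    ∃ ℓ : StrongDual ℝ E, ∀ x ∈ D, f y + ℓ (x - y) ≤ f x := by
  have hopen : IsOpen {q : E × ℝ | q.1 ∈ D ∧ f q.1 < q.2} := by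
    have := ((hfc.comp continuousOn_fst fun q hq => hq).sub continuousOn_snd)
      |>.isOpen_inter_preimage (hDo.preimage continuous_fst) (isOpen_Iio (a := 0))
    convert this using 1
    ext q
    exact and_congr Iff.rfl sub_neg.symm
  obtain ⟨φ, hφ⟩ := geometric_hahn_banach_open_point hf.convex_strict_epigraph hopen
    (fun h => lt_irrefl _ h.2 : (y, f y) ∉ {q : E × ℝ | q.1 ∈ D ∧ f q.1 < q.2})
  set c := φ (0, 1)
  set ℓ₀ := φ.comp (ContinuousLinearMap.inl ℝ E ℝ)
  have hφ_apply : ∀ x r, φ (x, r) = ℓ₀ x + r * c := fun x r => by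
    rw [show (x, r) = (x, 0) + r • ((0 : E), (1 : ℝ)) by ext <;> simp, map_add, map_smul]
    rfl
  have hc : c < 0 := by
    have := hφ (y, f y + 1) ⟨hy, lt_add_one _⟩
    rw [hφ_apply, hφ_apply] at this
    linarith
  refine ⟨(-c)⁻¹ • ℓ₀, fun x hx => le_of_forall_pos_lt_add fun ε hε => ?_⟩
  have := hφ (x, f x + ε) ⟨hx, lt_add_of_pos_right _ hε⟩
  rw [hφ_apply, hφ_apply] at this
  have key : (ℓ₀ x - ℓ₀ y) / -c < f x + ε - f y := by
    rw [div_lt_iff₀ (neg_pos.2 hc)]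
    linarith
  show f y + (-c)⁻¹ * ℓ₀ (x - y) < f x + ε
  rw [map_sub, inv_mul_eq_div]
  linarith

variable [LocallyConvexSpace ℝ E]

theorem exists_continuous_seminorm_ball_subset {U : Set E} {z : E} (hU : U ∈ 𝓝 z) :
    ∃ p : Seminorm ℝ E, Continuous p ∧ p.ball z 1 ⊆ U := by
  obtain ⟨s, r, hr, hsU⟩ := ((PolynormableSpace.withSeminorms ℝ E).mem_nhds_iff z U).1 hU
  refine ⟨r.toNNReal⁻¹ • s.sup fun p : {p : Seminorm ℝ E // Continuous p} => p.1, ?_, ?_⟩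
  · exact (Seminorm.continuous_finsetSup fun p _ => p.2).const_smul _
  · rwa [Seminorm.ball_smul _ (by positivity), NNReal.coe_inv, Real.coe_toNNReal _ hr.le,
      one_div, inv_inv]

theorem ConvexOn.exists_convexOn_univ_eventuallyEq {D : Set E} {f : E → ℝ} (hDo : IsOpen D)
    (hf : ConvexOn ℝ D f) (hfc : ContinuousOn f D) {z : E} (hz : z ∈ D) :
    ∃ F : E → ℝ, Continuous F ∧ ConvexOn ℝ univ F ∧ F =ᶠ[𝓝 z] f := by
  obtain ⟨p, hp, hpU⟩ := exists_continuous_seminorm_ball_subset (inter_mem (hDo.mem_nhds hz)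
    ((hfc.continuousAt (hDo.mem_nhds hz)).preimage_mem_nhds (Metric.ball_mem_nhds (f z) one_pos)))
  have hfz : ∀ y ∈ p.ball z 1, f z - 1 < f y ∧ f y < f z + 1 := fun y hy => by
    have h : |f y - f z| < 1 := (hpU hy).2
    constructor <;> linarith [abs_sub_lt_iff.1 h]
  set S := p.ball z (1 / 2)
  have hSz : ∀ y ∈ S, p.ball y (1 / 2) ⊆ p.ball z 1 := fun y hy x hx => by
    have := map_add_le_add p (x - y) (y - z)
    rw [sub_add_sub_cancel] at this
    rw [p.mem_ball] at hx hy ⊢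
    linarith
  have hSD : S ⊆ D := fun y hy => (hpU (p.ball_mono (by norm_num) hy)).1
  choose ℓ hℓ using fun y : S => hf.exists_subgradient hDo hfc (hSD y.2)
  have hℓp : ∀ (y : S) v, ℓ y v ≤ 4 * p v := fun y v =>
    (subgradient_le_div_mul_seminorm (hℓ y) (by norm_num)
      ((hSz y y.2).trans fun x hx => (hpU hx).1)
      (fun x hx => by linarith [hfz x (hSz y y.2 hx), hfz y (p.ball_mono (by norm_num) y.2)]) v
      |>.trans_eq (by norm_num : (2 : ℝ) / (1 / 2) * p v = 4 * p v))
  have hc : BddAbove (range fun y : S => f y - ℓ y y) := by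
    refine ⟨f z + 4 * p z, forall_mem_range.2 fun y => ?_⟩
    have h1 := hℓ y z hz
    have h2 := hℓp y (-z)
    rw [map_sub] at h1
    rw [map_neg, map_neg_eq_map] at h2
    linarith
  have : Nonempty S := ⟨⟨z, p.mem_ball_self (by norm_num)⟩⟩
  obtain ⟨hFc, hFconv⟩ := continuous_convexOn_ciSup_affine hc hp fun y => hℓp y
  refine ⟨_, hFc, hFconv, ?_⟩
  have hSo : IsOpen S := isOpen_lt (hp.comp (continuous_sub_right z)) continuous_const
  refine mem_of_superset (hSo.mem_nhds (p.mem_ball_self (by norm_num))) fun x hx => ?_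
  have hle : ∀ y : S, f y - ℓ y y + ℓ y x ≤ f x := fun y => by
    have := hℓ y x (hSD hx)
    rw [map_sub] at this
    linarith
  exact le_antisymm (ciSup_le hle)
    (le_ciSup_of_le ⟨f x, forall_mem_range.2 hle⟩ ⟨x, hx⟩ (by simp))

end Convex

theorem isAsplund_iff_global_convex_frechet_general (E : Type*) [AddCommGroup E] [Module ℝ E] [TopologicalSpace E]
    [IsTopologicalAddGroup E] [ContinuousSMul ℝ E] [LocallyConvexSpace ℝ E] :
    IsAsplund E ↔ ∀ f : E → ℝ, Continuous f → ConvexOn ℝ Set.univ f →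
      ∃ G : Set E, IsGδ G ∧ Dense G ∧ ∀ x ∈ G, FrechetDiffAt f x := by
  refine ⟨fun hE f hf hfconv => ?_, fun H D f _ hDo _ hfc hf => ?_⟩
  · obtain ⟨G, -, hGδ, hGd, hGf⟩ :=
      hE univ f univ_nonempty isOpen_univ convex_univ hf.continuousOn hfconv
    have hGδ' := hGδ.preimage (Homeomorph.Set.univ E).symm.continuous
    refine ⟨G, hGδ', fun x => ?_, hGf⟩
    simpa using Subtype.dense_iff.1 hGd (mem_univ x)
  · obtain ⟨G, hGδ, hGS, hDG⟩ := exists_isGδ_subset_closure_of_locally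
      (S := D ∩ {x | FrechetDiffAt f x}) (U := D) fun z hz => by
        obtain ⟨F, hFc, hFconv, hFf⟩ := hf.exists_convexOn_univ_eventuallyEq hDo hfc hz
        obtain ⟨GF, hGFδ, hGFd, hGF⟩ := H F hFc hFconv
        obtain ⟨V, hV, hVo, hzV⟩ :=
          eventually_nhds_iff.1 (hFf.eventually_nhds.and (hDo.mem_nhds hz))
        refine ⟨V ∩ GF, hVo.isGδ.inter hGFδ,
          fun y hy => ⟨(hV y hy.1).2, (hGF y hy.2).congr_of_eventuallyEq
            (show F =ᶠ[𝓝 y] f from (hV y hy.1).1).symm⟩,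
          mem_of_superset (hVo.mem_nhds hzV) fun y hy => hVo.inter_closure ⟨hy, hGFd y⟩⟩
    refine ⟨G, fun x hx => (hGS hx).1, hGδ.preimage continuous_subtype_val, ?_,
      fun x hx => (hGS hx).2⟩
    rw [Subtype.dense_iff, Subtype.image_preimage_coe, inter_eq_right.2 fun x hx => (hGS hx).1]
    exact hDG

/-- A Baire real locally convex space `E` is Asplund if and only if every continuous convex
function `f : E → ℝ` defined on all of `E` is Fréchet differentiable at every point of some
dense `Gδ` subset of `E`. -/
theorem isAsplund_iff_global_convex_frechet (E : Type*) [AddCommGroup E] [Module ℝ E] [TopologicalSpace E]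
    [IsTopologicalAddGroup E] [ContinuousSMul ℝ E] [LocallyConvexSpace ℝ E] [T2Space E]
    [BaireSpace E] :
    IsAsplund E ↔ ∀ f : E → ℝ, Continuous f → ConvexOn ℝ Set.univ f →
      ∃ G : Set E, IsGδ G ∧ Dense G ∧ ∀ x ∈ G, FrechetDiffAt f x :=
  isAsplund_iff_global_convex_frechet_general E
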